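/- arXiv:2006.00463 — 2 statements merged into one kernel-verified Lean document; each statement's English description precedes it below -/
import Mathlib

section
/- Suppose b, σ, σ⁰ : [0,T] × ℝ^d × 𝒫₂(ℝ^d) → ℝ^d (resp. matrix-valued) satisfy: (i) the one-sided polynomial monotonicity condition 2(x−x̄)·(b_t(x,μ)−b_t(x̄,μ̄)) + (p₁−1)|σ_t(x,μ)−σ_t(x̄,μ̄)|² + (p₁−1)|σ⁰_t(x,μ)−σ⁰_t(x̄,μ̄)|² ≤ L(|x−x̄|² + W₂²(μ,μ̄)) for some p₁ > 2; and (ii) the drift bound |b_t(x,μ)−b_t(x̄,μ̄)| ≤ L((1+|x|+|x̄|)^{ρ/2}|x−x̄| + W₂(μ,μ̄)). Then there exists a constant K = K(L) > 0 such that |σ_t(x,μ)−σ_t(x̄,μ̄)| + |σ⁰_t(x,μ)−σ⁰_t(x̄,μ̄)| ≤ K((1+|x|+|x̄|)^{ρ/4}|x−x̄| + W₂(μ,μ̄)) for all t ∈ [0,T], x,x̄ ∈ ℝ^d and μ,μ̄ ∈ 𝒫₂(ℝ^d). -/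
open MeasureTheory Set
open scoped ENNReal BigOperators RealInnerProductSpace

/-- The squared 2-Wasserstein distance, defined as the infimum over couplings of the
integrated squared Euclidean distance. -/
noncomputable def W2sq {d : ℕ}
    (μ ν : Measure (EuclideanSpace ℝ (Fin d))) : ℝ :=
  sInf {r : ℝ |
    ∃ π : Measure (EuclideanSpace ℝ (Fin d) × EuclideanSpace ℝ (Fin d)),
      IsProbabilityMeasure π ∧ π.map Prod.fst = μ ∧ π.map Prod.snd = ν ∧
      r = ∫ p, ‖p.1 - p.2‖ ^ 2 ∂π}

/-- The 2-Wasserstein distance. -/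
noncomputable def W2 {d : ℕ}
    (μ ν : Measure (EuclideanSpace ℝ (Fin d))) : ℝ :=
  Real.sqrt (W2sq μ ν)

/-- `μ ∈ 𝒫₂(ℝ^d)`: a probability measure with finite second moment. -/
def MemP2 {d : ℕ} (μ : Measure (EuclideanSpace ℝ (Fin d))) : Prop :=
  IsProbabilityMeasure μ ∧ Integrable (fun x => ‖x‖ ^ 2) μ

/-! The monotonicity condition bounds `(p₁ - 1)(|Δσ|² + |Δσ⁰|²)` by `L(|x - x̄|² + W₂²)` minus
`2 (x - x̄)·Δb`. By Cauchy–Schwarz and the drift bound this remainder is at most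
`2L |x - x̄| ((1 + |x| + |x̄|)^{ρ/2} |x - x̄| + W₂)`, so everything is dominated by
`4L (Q |x - x̄| + W₂)²` with `Q = (1 + |x| + |x̄|)^{ρ/4} ≥ 1`; taking square roots gives the
claim with `K = √(8L / (p₁ - 1))`. -/

lemma W2_sq {d : ℕ} (μ ν : Measure (EuclideanSpace ℝ (Fin d))) :
    W2 μ ν ^ 2 = W2sq μ ν := by
  refine Real.sq_sqrt (Real.sInf_nonneg ?_)
  rintro r ⟨π, -, -, -, rfl⟩
  exact integral_nonneg fun p => by positivity

lemma le_of_two_inner_add_le_of_norm_le {E : Type*} [NormedAddCommGroup E]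
    [InnerProductSpace ℝ E] {u v : E} {S L Q w : ℝ} (hL : 0 ≤ L) (hQ : 1 ≤ Q) (hw : 0 ≤ w)
    (hmono : 2 * ⟪u, v⟫ + S ≤ L * (‖u‖ ^ 2 + w ^ 2))
    (hv : ‖v‖ ≤ L * (Q ^ 2 * ‖u‖ + w)) :
    S ≤ 4 * L * (Q * ‖u‖ + w) ^ 2 := by
  have hu := norm_nonneg u
  have hinner : -(‖u‖ * (L * (Q ^ 2 * ‖u‖ + w))) ≤ ⟪u, v⟫ :=
    (neg_le_neg (mul_le_mul_of_nonneg_left hv hu)).trans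
      (neg_le_of_abs_le (abs_real_inner_le_norm u v))
  have hQu : ‖u‖ ≤ Q * ‖u‖ := le_mul_of_one_le_left hu hQ
  have hQu_sq : ‖u‖ ^ 2 ≤ (Q * ‖u‖) ^ 2 := pow_le_pow_left₀ hu hQu 2
  have hQuw : ‖u‖ * w ≤ Q * ‖u‖ * w := mul_le_mul_of_nonneg_right hQu hw
  nlinarith [mul_le_mul_of_nonneg_left hQu_sq hL, mul_le_mul_of_nonneg_left hQuw hL,
    mul_nonneg hL (sq_nonneg w), mul_nonneg hL (sq_nonneg (Q * ‖u‖)),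
    mul_nonneg hL (mul_nonneg (hu.trans hQu) hw)]

lemma add_le_sqrt_mul_of_mul_sq_add_sq_le {s s₀ c B R : ℝ} (hc : 0 < c) (hR : 0 ≤ R)
    (h : c * (s ^ 2 + s₀ ^ 2) ≤ B * R ^ 2) :
    s + s₀ ≤ √(2 * B / c) * R := by
  rw [← Real.sqrt_sq hR, ← Real.sqrt_mul' _ (sq_nonneg R)]
  refine Real.le_sqrt_of_sq_le (add_sq_le.trans ?_)
  rw [div_mul_eq_mul_div, le_div_iff₀ hc]
  nlinarith

theorem diffusion_polynomial_lipschitz_general {d m m₀ : ℕ} (T L ρ p₁ : ℝ)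
    (hL : 0 < L) (hρ : 0 < ρ) (hp₁ : 2 < p₁)
    (b : ℝ → EuclideanSpace ℝ (Fin d) → Measure (EuclideanSpace ℝ (Fin d)) →
      EuclideanSpace ℝ (Fin d))
    (σ : ℝ → EuclideanSpace ℝ (Fin d) → Measure (EuclideanSpace ℝ (Fin d)) →
      EuclideanSpace ℝ (Fin d × Fin m))
    (σ₀ : ℝ → EuclideanSpace ℝ (Fin d) → Measure (EuclideanSpace ℝ (Fin d)) →
      EuclideanSpace ℝ (Fin d × Fin m₀))
    (hmono : ∀ t ∈ Icc (0:ℝ) T, ∀ (x x' : EuclideanSpace ℝ (Fin d))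
      (μ μ' : Measure (EuclideanSpace ℝ (Fin d))), MemP2 μ → MemP2 μ' →
      2 * (inner ℝ (x - x') (b t x μ - b t x' μ') : ℝ)
          + (p₁ - 1) * ‖σ t x μ - σ t x' μ'‖ ^ 2
          + (p₁ - 1) * ‖σ₀ t x μ - σ₀ t x' μ'‖ ^ 2
        ≤ L * (‖x - x'‖ ^ 2 + W2sq μ μ'))
    (hb : ∀ t ∈ Icc (0:ℝ) T, ∀ (x x' : EuclideanSpace ℝ (Fin d))
      (μ μ' : Measure (EuclideanSpace ℝ (Fin d))), MemP2 μ → MemP2 μ' →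
      ‖b t x μ - b t x' μ'‖
        ≤ L * ((1 + ‖x‖ + ‖x'‖) ^ (ρ/2) * ‖x - x'‖ + W2 μ μ')) :
    ∃ K > (0 : ℝ), ∀ t ∈ Icc (0:ℝ) T, ∀ (x x' : EuclideanSpace ℝ (Fin d))
      (μ μ' : Measure (EuclideanSpace ℝ (Fin d))), MemP2 μ → MemP2 μ' →
      ‖σ t x μ - σ t x' μ'‖ + ‖σ₀ t x μ - σ₀ t x' μ'‖
        ≤ K * ((1 + ‖x‖ + ‖x'‖) ^ (ρ/4) * ‖x - x'‖ + W2 μ μ') := by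
  have hp : 0 < p₁ - 1 := by linarith
  refine ⟨√(2 * (4 * L) / (p₁ - 1)), by positivity, fun t ht x x' μ μ' hμ hμ' => ?_⟩
  have hbase : 1 ≤ 1 + ‖x‖ + ‖x'‖ := by linarith [norm_nonneg x, norm_nonneg x']
  have hQ : 1 ≤ (1 + ‖x‖ + ‖x'‖) ^ (ρ / 4) := Real.one_le_rpow hbase (by positivity)
  have hW : 0 ≤ W2 μ μ' := Real.sqrt_nonneg _
  have hdrift := hb t ht x x' μ μ' hμ hμ'
  rw [show ρ / 2 = ρ / 4 * (2 : ℕ) by push_cast; ring,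
    Real.rpow_mul_natCast (by linarith) _ 2] at hdrift
  have hsq := le_of_two_inner_add_le_of_norm_le hL.le hQ hW
    (S := (p₁ - 1) * (‖σ t x μ - σ t x' μ'‖ ^ 2 + ‖σ₀ t x μ - σ₀ t x' μ'‖ ^ 2))
    (by rw [W2_sq]; linarith [hmono t ht x x' μ μ' hμ hμ']) hdrift
  exact add_le_sqrt_mul_of_mul_sq_add_sq_le hp (by positivity) hsq

/-- If `b, σ, σ⁰` satisfy the one-sided polynomial monotonicity condition with exponent
`p₁ > 2` and `b` is polynomially Lipschitz with exponent `ρ/2`, then `σ` and `σ⁰` are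
polynomially Lipschitz with exponent `ρ/4`. -/
theorem diffusion_polynomial_lipschitz {d m m₀ : ℕ} (T L ρ p₁ : ℝ)
    (hT : 0 < T) (hL : 0 < L) (hρ : 0 < ρ) (hp₁ : 2 < p₁)
    (b : ℝ → EuclideanSpace ℝ (Fin d) → Measure (EuclideanSpace ℝ (Fin d)) →
      EuclideanSpace ℝ (Fin d))
    (σ : ℝ → EuclideanSpace ℝ (Fin d) → Measure (EuclideanSpace ℝ (Fin d)) →
      EuclideanSpace ℝ (Fin d × Fin m))
    (σ₀ : ℝ → EuclideanSpace ℝ (Fin d) → Measure (EuclideanSpace ℝ (Fin d)) →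
      EuclideanSpace ℝ (Fin d × Fin m₀))
    (hmono : ∀ t ∈ Icc (0:ℝ) T, ∀ (x x' : EuclideanSpace ℝ (Fin d))
      (μ μ' : Measure (EuclideanSpace ℝ (Fin d))), MemP2 μ → MemP2 μ' →
      2 * (inner ℝ (x - x') (b t x μ - b t x' μ') : ℝ)
          + (p₁ - 1) * ‖σ t x μ - σ t x' μ'‖ ^ 2
          + (p₁ - 1) * ‖σ₀ t x μ - σ₀ t x' μ'‖ ^ 2
        ≤ L * (‖x - x'‖ ^ 2 + W2sq μ μ'))
    (hb : ∀ t ∈ Icc (0:ℝ) T, ∀ (x x' : EuclideanSpace ℝ (Fin d))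
      (μ μ' : Measure (EuclideanSpace ℝ (Fin d))), MemP2 μ → MemP2 μ' →
      ‖b t x μ - b t x' μ'‖
        ≤ L * ((1 + ‖x‖ + ‖x'‖) ^ (ρ/2) * ‖x - x'‖ + W2 μ μ')) :
    ∃ K > (0 : ℝ), ∀ t ∈ Icc (0:ℝ) T, ∀ (x x' : EuclideanSpace ℝ (Fin d))
      (μ μ' : Measure (EuclideanSpace ℝ (Fin d))), MemP2 μ → MemP2 μ' →
      ‖σ t x μ - σ t x' μ'‖ + ‖σ₀ t x μ - σ₀ t x' μ'‖
        ≤ K * ((1 + ‖x‖ + ‖x'‖) ^ (ρ/4) * ‖x - x'‖ + W2 μ μ') :=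
  diffusion_polynomial_lipschitz_general T L ρ p₁ hL hρ hp₁ b σ σ₀ hmono hb
end

section
/- Let f : ℝ^d × 𝒫₂(ℝ^d) → ℝ be such that its gradient in the state variable ∂_x f and its Lions measure derivative ∂_μ f satisfy, for constants L > 0 and χ, ξ ≥ 0: |∂_x f(x,μ) − ∂_x f(x̄,μ̄)| ≤ L((1+|x|+|x̄|)^χ |x−x̄| + W₂(μ,μ̄)) and |∂_μ f(x,μ,y) − ∂_μ f(x̄,μ̄,ȳ)| ≤ L((1+|x|+|x̄|)^{ξ+1}|x−x̄| + W₂(μ,μ̄) + |y−ȳ|). Then for all N-tuples (x¹,…,x^N) and (x̄¹,…,x̄^N) in ℝ^d and every i ∈ {1,…,N}, |f(x^i, (1/N)∑_j δ_{x^j}) − f(x̄^i, (1/N)∑_j δ_{x̄^j}) − ∂_x f(x̄^i, (1/N)∑_j δ_{x̄^j})·(x^i − x̄^i) − (1/N)∑_{j=1}^N ∂_μ f(x̄^i, (1/N)∑_j δ_{x̄^j}, x̄^j)·(x^j − x̄^j)| ≤ K(1+|x^i|+|x̄^i|)^χ |x^i − x̄^i|² + K(1/N)∑_{j=1}^N |x^j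 − x̄^j|², where the constant K > 0 does not depend on N. -/
/-!
Interpolate from `x'` to `x` in two straight steps: first move every particle except the `i`-th
one, then the `i`-th one alone. In the first step the state variable is frozen, so only the
Lipschitz bound of `∂_μ f` in `(μ, y)` enters, together with
`W₂(μ^N_x, μ^N_x')² ≤ (1/N) ∑ |x^j - x'^j|²`; this costs `O((1/N) ∑ |x^j - x'^j|²)`.
In the second step the bound on `∂ₓ f` produces the term `(1 + |x^i| + |x'^i|)^χ |x^i - x'^i|²`,
while `∂_μ f` enters only with the factor `1/N`, but multiplied by the larger power
`(1 + |x^i| + |x'^i|)^(ξ+1)`.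
Replacing each particle by `m` copies changes no empirical measure and turns that `1/N` into
`1/(mN)`; letting `m → ∞` removes the term.
-/

open MeasureTheory Set
open scoped ENNReal BigOperators RealInnerProductSpace

/-- The empirical measure `(1/N) ∑_{j} δ_{x_j}`. -/
noncomputable def emp {d N : ℕ} (x : Fin N → EuclideanSpace ℝ (Fin d)) :
    Measure (EuclideanSpace ℝ (Fin d)) :=
  (N : ℝ≥0∞)⁻¹ • ∑ j, Measure.dirac (x j)

open Filter Topology

section Empirical

variable {α : Type*} [MeasurableSpace α] {N : ℕ}

lemma isProbabilityMeasure_inv_smul_sum_dirac (hN : 0 < N) (p : Fin N → α) :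
    IsProbabilityMeasure ((N : ℝ≥0∞)⁻¹ • ∑ j, Measure.dirac (p j)) := by
  constructor
  simp [ENNReal.inv_mul_cancel (Nat.cast_ne_zero.2 hN.ne') (ENNReal.natCast_ne_top N)]

lemma integrable_inv_smul_sum_dirac [MeasurableSingletonClass α] (hN : 0 < N) (p : Fin N → α)
    (g : α → ℝ) : Integrable g ((N : ℝ≥0∞)⁻¹ • ∑ j, Measure.dirac (p j)) :=
  (integrable_finsetSum_measure.2 fun _ _ => integrable_dirac enorm_lt_top).smul_measure
    (ENNReal.inv_ne_top.2 (Nat.cast_ne_zero.2 hN.ne'))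

lemma integral_inv_smul_sum_dirac [MeasurableSingletonClass α] (p : Fin N → α) (g : α → ℝ) :
    ∫ a, g a ∂((N : ℝ≥0∞)⁻¹ • ∑ j, Measure.dirac (p j)) = (N : ℝ)⁻¹ * ∑ j, g (p j) := by
  rw [integral_smul_measure,
    integral_finsetSum_measure fun j _ => integrable_dirac enorm_lt_top]
  simp

end Empirical

lemma sum_modNat {M : Type*} [AddCommMonoid M] {m n : ℕ} (g : Fin n → M) :
    ∑ J : Fin (m * n), g J.modNat = m • ∑ j, g j := by
  calc ∑ J : Fin (m * n), g J.modNat = ∑ J, g (finProdFinEquiv.symm J).2 := rfl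
    _ = ∑ p : Fin m × Fin n, g p.2 := finProdFinEquiv.symm.sum_comp (fun p => g p.2)
    _ = m • ∑ j, g j := by simp [Fintype.sum_prod_type]

lemma inv_mul_sum_modNat {m n : ℕ} (hm : m ≠ 0) (g : Fin n → ℝ) :
    ((m * n : ℕ) : ℝ)⁻¹ * ∑ J : Fin (m * n), g J.modNat = (n : ℝ)⁻¹ * ∑ j, g j := by
  rw [sum_modNat, nsmul_eq_mul, Nat.cast_mul]
  field_simp

lemma abs_sub_sub_le_of_hasDerivAt {φ ψ : ℝ → ℝ} {c B : ℝ}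
    (hφ : ∀ t ∈ Icc (0 : ℝ) 1, HasDerivAt φ (ψ t) t) (hψ : ∀ t ∈ Icc (0 : ℝ) 1, |ψ t - c| ≤ B) :
    |φ 1 - φ 0 - c| ≤ B := by
  have h := (convex_Icc (0 : ℝ) 1).norm_image_sub_le_of_norm_hasDerivWithin_le
    (f := fun t => φ t - t * c) (f' := fun t => ψ t - c)
    (fun t ht => by
      have h := ((hφ t ht).sub ((hasDerivAt_id' t).mul_const c)).hasDerivWithinAt (s := Icc 0 1)
      rwa [one_mul] at h)
    (fun t ht => hψ t ht) (left_mem_Icc.2 zero_le_one) (right_mem_Icc.2 zero_le_one)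
  simpa [sub_sub, add_comm] using h

lemma le_of_forall_le_add_div_natCast {a b c : ℝ} (h : ∀ m : ℕ, 0 < m → a ≤ b + c / m) :
    a ≤ b := by
  have hlim : Tendsto (fun m : ℕ => b + c / m) atTop (𝓝 b) := by
    simpa using tendsto_const_nhds.add (tendsto_const_div_atTop_nhds_zero_nat c)
  exact ge_of_tendsto hlim (eventually_atTop.2 ⟨1, fun m hm => h m hm⟩)

lemma inv_mul_sum_sqrt_add_mul_le {M : ℕ} (hM : 0 < M) (a : Fin M → ℝ) :
    (M : ℝ)⁻¹ * ∑ J, (√((M : ℝ)⁻¹ * ∑ K, a K ^ 2) + a J) * a J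
      ≤ 2 * ((M : ℝ)⁻¹ * ∑ J, a J ^ 2) := by
  set S := (M : ℝ)⁻¹ * ∑ K, a K ^ 2
  have hS : 0 ≤ S := by positivity
  -- AM-GM: `√S * a ≤ (S + a²) / 2`
  have hterm : ∀ J, (√S + a J) * a J ≤ S / 2 + 3 / 2 * a J ^ 2 := fun J => by
    nlinarith [two_mul_le_add_sq (√S) (a J), Real.sq_sqrt hS]
  calc (M : ℝ)⁻¹ * ∑ J, (√S + a J) * a J
      ≤ (M : ℝ)⁻¹ * ∑ J : Fin M, (S / 2 + 3 / 2 * a J ^ 2) := by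
        gcongr with J; exact hterm J
    _ = 2 * S := by
        rw [Finset.sum_add_distrib, ← Finset.mul_sum]
        simp only [Finset.sum_const, Finset.card_univ, Fintype.card_fin, nsmul_eq_mul, S]
        field_simp
        ring

section Euclidean

variable {d : ℕ}

local notation "E" => EuclideanSpace ℝ (Fin d)

lemma memP2_emp {N : ℕ} (hN : 0 < N) (x : Fin N → E) : MemP2 (emp x) :=
  ⟨isProbabilityMeasure_inv_smul_sum_dirac hN x, integrable_inv_smul_sum_dirac hN x _⟩

lemma W2_emp_le {N : ℕ} (hN : 0 < N) (x y : Fin N → E) :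
    W2 (emp x) (emp y) ≤ √((N : ℝ)⁻¹ * ∑ j, ‖x j - y j‖ ^ 2) := by
  refine Real.sqrt_le_sqrt (csInf_le ⟨0, ?_⟩ ?_)
  · rintro r ⟨π, -, -, -, rfl⟩
    exact integral_nonneg fun p => by positivity
  refine ⟨(N : ℝ≥0∞)⁻¹ • ∑ j, Measure.dirac (x j, y j),
    isProbabilityMeasure_inv_smul_sum_dirac hN _, ?_, ?_, ?_⟩
  · rw [Measure.map_smul, Measure.map_finset_sum' measurable_fst.aemeasurable]
    simp only [Measure.map_dirac' measurable_fst]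
    rfl
  · rw [Measure.map_smul, Measure.map_finset_sum' measurable_snd.aemeasurable]
    simp only [Measure.map_dirac' measurable_snd]
    rfl
  · rw [integral_inv_smul_sum_dirac]

lemma W2_emp_le_of_norm_sub_le {N : ℕ} (hN : 0 < N) {x y : Fin N → E} {r : Fin N → ℝ}
    (hr : ∀ j, ‖x j - y j‖ ≤ r j) : W2 (emp x) (emp y) ≤ √((N : ℝ)⁻¹ * ∑ j, r j ^ 2) := by
  refine (W2_emp_le hN x y).trans (Real.sqrt_le_sqrt ?_)
  gcongr with j
  exact hr j

lemma emp_repeat {m N : ℕ} (hm : m ≠ 0) (x : Fin N → E) : emp (Fin.repeat m x) = emp x := by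
  simp only [emp, Fin.repeat_apply, sum_modNat fun j => Measure.dirac (x j), smul_smul,
    ← Nat.cast_smul_eq_nsmul ℝ≥0∞, Nat.cast_mul]
  rw [ENNReal.mul_inv (Or.inr (ENNReal.natCast_ne_top N)) (Or.inl (ENNReal.natCast_ne_top m)),
    mul_comm _ (N : ℝ≥0∞)⁻¹, mul_assoc,
    ENNReal.inv_mul_cancel (Nat.cast_ne_zero.2 hm) (ENNReal.natCast_ne_top m), mul_one]

end Euclidean

lemma norm_smul_le_of_mem_Icc {F : Type*} [SeminormedAddCommGroup F] [NormedSpace ℝ F] {t : ℝ}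
    (ht : t ∈ Icc (0 : ℝ) 1) (v : F) : ‖t • v‖ ≤ ‖v‖ := by
  rw [norm_smul, Real.norm_of_nonneg ht.1]
  exact mul_le_of_le_one_left (norm_nonneg _) ht.2

lemma one_add_norm_add_smul_sub_add_norm_le {F : Type*} [SeminormedAddCommGroup F]
    [NormedSpace ℝ F] (a b : F) {s : ℝ} (hs : s ∈ Icc (0 : ℝ) 1) :
    1 + ‖a + s • (b - a)‖ + ‖a‖ ≤ 2 * (1 + ‖b‖ + ‖a‖) := by
  have hconv : ‖a + s • (b - a)‖ ≤ (1 - s) * ‖a‖ + s * ‖b‖ := by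
    rw [show a + s • (b - a) = (1 - s) • a + s • b by module]
    refine (norm_add_le _ _).trans_eq ?_
    rw [norm_smul, norm_smul, Real.norm_of_nonneg (sub_nonneg.2 hs.2), Real.norm_of_nonneg hs.1]
  nlinarith [hs.1, hs.2, norm_nonneg a, norm_nonneg b]

section Update

variable {ι F : Type*} [DecidableEq ι]

lemma update_add_single_sub [AddCommGroup F] (y y' : ι → F) (I : ι) :
    Function.update y I (y' I) + Pi.single I (y I - y' I) = y := funext fun J => by
  by_cases hJ : J = I
  · subst hJ; simp
  · simp [hJ]

lemma norm_update_add_smul_single_sub_le [SeminormedAddCommGroup F] [NormedSpace ℝ F]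
    (y y' : ι → F) (I : ι) {s : ℝ} (hs : s ∈ Icc (0 : ℝ) 1) (J : ι) :
    ‖(Function.update y I (y' I) + s • (Pi.single I (y I - y' I) : ι → F)) J - y' J‖
      ≤ ‖y J - y' J‖ := by
  by_cases hJ : J = I
  · subst hJ
    simp only [Pi.add_apply, Pi.smul_apply, Function.update_self, Pi.single_eq_same,
      add_sub_cancel_left]
    exact norm_smul_le_of_mem_Icc hs _
  · simp [hJ]

end Update

section Lions

variable {d : ℕ}

local notation "E" => EuclideanSpace ℝ (Fin d)

def WeightedLipschitzX (L χ : ℝ) (Dx : E → Measure E → E) : Prop :=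
  ∀ (x x' : E) (μ μ' : Measure E), MemP2 μ → MemP2 μ' →
    ‖Dx x μ - Dx x' μ'‖ ≤ L * ((1 + ‖x‖ + ‖x'‖) ^ χ * ‖x - x'‖ + W2 μ μ')

def WeightedLipschitzμ (L p : ℝ) (Dμ : E → Measure E → E → E) : Prop :=
  ∀ (x x' y y' : E) (μ μ' : Measure E), MemP2 μ → MemP2 μ' →
    ‖Dμ x μ y - Dμ x' μ' y'‖ ≤ L * ((1 + ‖x‖ + ‖x'‖) ^ p * ‖x - x'‖ + W2 μ μ' + ‖y - y'‖)

variable (f : EuclideanSpace ℝ (Fin d) → Measure (EuclideanSpace ℝ (Fin d)) → ℝ)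
  (Dx : EuclideanSpace ℝ (Fin d) → Measure (EuclideanSpace ℝ (Fin d)) → EuclideanSpace ℝ (Fin d))
  (Dμ : EuclideanSpace ℝ (Fin d) → Measure (EuclideanSpace ℝ (Fin d)) →
    EuclideanSpace ℝ (Fin d) → EuclideanSpace ℝ (Fin d))
  {M : ℕ}

/-- The derivative of `y ↦ f (y I) (emp y)` on `(ℝ^d)^M` predicted by the chain rule for the
lifting of `f`; requiring it (`HasEmpiricalGradient`) is how `Dμ` being the Lions derivative of `f`
enters. -/
noncomputable def empiricalGradient (y : Fin M → E) (I : Fin M) : (Fin M → E) →L[ℝ] ℝ :=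
  (innerSL ℝ (Dx (y I) (emp y))).comp (ContinuousLinearMap.proj I)
    + (M : ℝ)⁻¹ • ∑ J, (innerSL ℝ (Dμ (y I) (emp y) (y J))).comp (ContinuousLinearMap.proj J)

def HasEmpiricalGradient (M : ℕ) : Prop :=
  ∀ (y : Fin M → E) (I : Fin M),
    HasFDerivAt (fun z : Fin M → E => f (z I) (emp z)) (empiricalGradient Dx Dμ y I) y

noncomputable def empiricalTaylorRemainder (y y' : Fin M → E) (I : Fin M) : ℝ :=
  f (y I) (emp y) - f (y' I) (emp y') - ⟪Dx (y' I) (emp y'), y I - y' I⟫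
    - (M : ℝ)⁻¹ * ∑ J, ⟪Dμ (y' I) (emp y') (y' J), y J - y' J⟫

lemma empiricalGradient_apply (y v : Fin M → E) (I : Fin M) :
    empiricalGradient Dx Dμ y I v
      = ⟪Dx (y I) (emp y), v I⟫ + (M : ℝ)⁻¹ * ∑ J, ⟪Dμ (y I) (emp y) (y J), v J⟫ := by
  simp [empiricalGradient]

lemma empiricalGradient_apply_single (y : Fin M → E) (I : Fin M) (w : E) :
    empiricalGradient Dx Dμ y I (Pi.single I w)
      = ⟪Dx (y I) (emp y), w⟫ + (M : ℝ)⁻¹ * ⟪Dμ (y I) (emp y) (y I), w⟫ := by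
  rw [empiricalGradient_apply, Pi.single_eq_same, Fintype.sum_eq_single I fun J hJ => by
    rw [Pi.single_eq_of_ne hJ, inner_zero_right], Pi.single_eq_same]

lemma empiricalTaylorRemainder_repeat {m N : ℕ} (hm : m ≠ 0) (x x' : Fin N → E)
    (I : Fin (m * N)) :
    empiricalTaylorRemainder f Dx Dμ (Fin.repeat m x) (Fin.repeat m x') I
      = empiricalTaylorRemainder f Dx Dμ x x' I.modNat := by
  simp only [empiricalTaylorRemainder, Fin.repeat_apply, emp_repeat hm,
    inv_mul_sum_modNat hm fun j => ⟪Dμ (x' I.modNat) (emp x') (x' j), x j - x' j⟫]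

variable {f Dx Dμ}

lemma HasEmpiricalGradient.abs_sub_sub_le (hf : HasEmpiricalGradient f Dx Dμ M)
    (y v : Fin M → E) (I : Fin M) {c B : ℝ}
    (hB : ∀ t ∈ Icc (0 : ℝ) 1, |empiricalGradient Dx Dμ (y + t • v) I v - c| ≤ B) :
    |f ((y + v) I) (emp (y + v)) - f (y I) (emp y) - c| ≤ B := by
  have hline : ∀ t : ℝ, HasDerivAt (fun s : ℝ => f ((y + s • v) I) (emp (y + s • v)))
      (empiricalGradient Dx Dμ (y + t • v) I v) t := fun t => by
    have hpath : HasDerivAt (fun s : ℝ => y + s • v) v t := by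
      simpa using ((hasDerivAt_id t).smul_const v).const_add y
    exact (hf (y + t • v) I).comp_hasDerivAt t hpath
  simpa using abs_sub_sub_le_of_hasDerivAt (fun t _ => hline t) hB

variable {L χ p : ℝ}

lemma HasEmpiricalGradient.abs_sub_sub_le_of_apply_eq_zero (hM : 0 < M) (hL : 0 ≤ L)
    (hDμ : WeightedLipschitzμ L p Dμ) (hf : HasEmpiricalGradient f Dx Dμ M)
    (y v : Fin M → E) (I : Fin M) (hv : v I = 0) :
    |f (y I) (emp (y + v)) - f (y I) (emp y)
        - (M : ℝ)⁻¹ * ∑ J, ⟪Dμ (y I) (emp y) (y J), v J⟫|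
      ≤ 2 * L * ((M : ℝ)⁻¹ * ∑ J, ‖v J‖ ^ 2) := by
  have key := hf.abs_sub_sub_le y v I
    (c := (M : ℝ)⁻¹ * ∑ J, ⟪Dμ (y I) (emp y) (y J), v J⟫)
    (B := 2 * L * ((M : ℝ)⁻¹ * ∑ J, ‖v J‖ ^ 2)) ?_
  · simpa [hv] using key
  intro t ht
  set S := (M : ℝ)⁻¹ * ∑ J, ‖v J‖ ^ 2
  have hyt : (y + t • v) I = y I := by simp [hv]
  have hnorm : ∀ J, ‖(y + t • v) J - y J‖ ≤ ‖v J‖ := fun J => by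
    rw [Pi.add_apply, add_sub_cancel_left, Pi.smul_apply]
    exact norm_smul_le_of_mem_Icc ht _
  have hW : W2 (emp (y + t • v)) (emp y) ≤ √S := W2_emp_le_of_norm_sub_le hM hnorm
  have hJ : ∀ J, |⟪Dμ (y I) (emp (y + t • v)) ((y + t • v) J) - Dμ (y I) (emp y) (y J), v J⟫|
      ≤ L * (√S + ‖v J‖) * ‖v J‖ := fun J => by
    refine (abs_real_inner_le_norm _ _).trans (mul_le_mul_of_nonneg_right ?_ (norm_nonneg _))
    have h := hDμ (y I) (y I) ((y + t • v) J) (y J) _ _ (memP2_emp hM (y + t • v)) (memP2_emp hM y)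
    simp only [sub_self, norm_zero, mul_zero, zero_add] at h
    exact h.trans (by gcongr; exact hnorm J)
  rw [empiricalGradient_apply, hyt, hv, inner_zero_right, zero_add, ← mul_sub,
    ← Finset.sum_sub_distrib, abs_mul, abs_of_nonneg (by positivity)]
  calc (M : ℝ)⁻¹ * |∑ J, (⟪Dμ (y I) (emp (y + t • v)) ((y + t • v) J), v J⟫
        - ⟪Dμ (y I) (emp y) (y J), v J⟫)|
      ≤ (M : ℝ)⁻¹ * ∑ J, L * (√S + ‖v J‖) * ‖v J‖ := by
        gcongr
        refine (Finset.abs_sum_le_sum_abs _ _).trans (Finset.sum_le_sum fun J _ => ?_)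
        rw [← inner_sub_left]
        exact hJ J
    _ = L * ((M : ℝ)⁻¹ * ∑ J, (√S + ‖v J‖) * ‖v J‖) := by
        simp only [Finset.mul_sum]
        exact Finset.sum_congr rfl fun J _ => by ring
    _ ≤ L * (2 * S) :=
        mul_le_mul_of_nonneg_left (inv_mul_sum_sqrt_add_mul_le hM fun J => ‖v J‖) hL
    _ = 2 * L * S := by ring

lemma HasEmpiricalGradient.abs_sub_sub_single_le (hM : 0 < M) (hL : 0 ≤ L) (hχ : 0 ≤ χ)
    (hp : 0 ≤ p) (hDx : WeightedLipschitzX L χ Dx) (hDμ : WeightedLipschitzμ L p Dμ)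
    (hf : HasEmpiricalGradient f Dx Dμ M) (z : Fin M → E) (I : Fin M) (w : E)
    {ν : Measure E} (hν : MemP2 ν) {r A : ℝ}
    (hW : ∀ s ∈ Icc (0 : ℝ) 1, W2 (emp (z + s • (Pi.single I w : Fin M → E))) ν ≤ r)
    (hA : ∀ s ∈ Icc (0 : ℝ) 1, 1 + ‖z I + s • w‖ + ‖z I‖ ≤ A) :
    |f (z I + w) (emp (z + (Pi.single I w : Fin M → E))) - f (z I) (emp z) - ⟪Dx (z I) ν, w⟫
        - (M : ℝ)⁻¹ * ⟪Dμ (z I) ν (z I), w⟫|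
      ≤ L * (A ^ χ * ‖w‖ + r) * ‖w‖ + (M : ℝ)⁻¹ * (L * (A ^ p * ‖w‖ + r + ‖w‖) * ‖w‖) := by
  have hzI : (z + (Pi.single I w : Fin M → E)) I = z I + w := by simp
  rw [← hzI, sub_sub _ ⟪Dx (z I) ν, w⟫]
  refine hf.abs_sub_sub_le z _ I fun s hs => ?_
  set zs := z + s • (Pi.single I w : Fin M → E)
  set u := z I + s • w
  have hzs : zs I = u := by simp [zs, u]
  have hu : ‖u - z I‖ ≤ ‖w‖ := by
    rw [add_sub_cancel_left]; exact norm_smul_le_of_mem_Icc hs w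
  have hweight : ∀ q : ℝ, 0 ≤ q → (1 + ‖u‖ + ‖z I‖) ^ q * ‖u - z I‖ ≤ A ^ q * ‖w‖ := fun q hq =>
    mul_le_mul (Real.rpow_le_rpow (by positivity) (hA s hs) hq) hu (norm_nonneg _)
      (Real.rpow_nonneg ((by positivity : (0 : ℝ) ≤ 1 + ‖u‖ + ‖z I‖).trans (hA s hs)) q)
  have hDx' : ‖Dx u (emp zs) - Dx (z I) ν‖ ≤ L * (A ^ χ * ‖w‖ + r) :=
    (hDx _ _ _ _ (memP2_emp hM zs) hν).trans
      (mul_le_mul_of_nonneg_left (add_le_add (hweight χ hχ) (hW s hs)) hL)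
  have hDμ' : ‖Dμ u (emp zs) u - Dμ (z I) ν (z I)‖ ≤ L * (A ^ p * ‖w‖ + r + ‖w‖) :=
    (hDμ _ _ _ _ _ _ (memP2_emp hM zs) hν).trans
      (mul_le_mul_of_nonneg_left (add_le_add (add_le_add (hweight p hp) (hW s hs)) hu) hL)
  rw [empiricalGradient_apply_single, hzs]
  calc |⟪Dx u (emp zs), w⟫ + (M : ℝ)⁻¹ * ⟪Dμ u (emp zs) u, w⟫
        - (⟪Dx (z I) ν, w⟫ + (M : ℝ)⁻¹ * ⟪Dμ (z I) ν (z I), w⟫)|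
      = |⟪Dx u (emp zs) - Dx (z I) ν, w⟫
          + (M : ℝ)⁻¹ * ⟪Dμ u (emp zs) u - Dμ (z I) ν (z I), w⟫| := by
        rw [inner_sub_left, inner_sub_left]; ring_nf
    _ ≤ ‖Dx u (emp zs) - Dx (z I) ν‖ * ‖w‖
          + (M : ℝ)⁻¹ * (‖Dμ u (emp zs) u - Dμ (z I) ν (z I)‖ * ‖w‖) := by
        refine (abs_add_le _ _).trans (add_le_add (abs_real_inner_le_norm _ _) ?_)
        rw [abs_mul, abs_of_nonneg (by positivity)]
        gcongr
        exact abs_real_inner_le_norm _ _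
    _ ≤ L * (A ^ χ * ‖w‖ + r) * ‖w‖ + (M : ℝ)⁻¹ * (L * (A ^ p * ‖w‖ + r + ‖w‖) * ‖w‖) := by
        gcongr

lemma HasEmpiricalGradient.abs_empiricalTaylorRemainder_le (hM : 0 < M) (hL : 0 ≤ L)
    (hχ : 0 ≤ χ) (hp : 0 ≤ p) (hDx : WeightedLipschitzX L χ Dx)
    (hDμ : WeightedLipschitzμ L p Dμ) (hf : HasEmpiricalGradient f Dx Dμ M)
    (y y' : Fin M → E) (I : Fin M) :
    |empiricalTaylorRemainder f Dx Dμ y y' I|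
      ≤ L * (((2 * (1 + ‖y I‖ + ‖y' I‖)) ^ χ + 1) * ‖y I - y' I‖ ^ 2
          + 3 * ((M : ℝ)⁻¹ * ∑ J, ‖y J - y' J‖ ^ 2))
        + (M : ℝ)⁻¹ * (L * (((2 * (1 + ‖y I‖ + ‖y' I‖)) ^ p + 2) * ‖y I - y' I‖ ^ 2
          + (M : ℝ)⁻¹ * ∑ J, ‖y J - y' J‖ ^ 2)) := by
  set A := 2 * (1 + ‖y I‖ + ‖y' I‖)
  set w := y I - y' I
  set S := (M : ℝ)⁻¹ * ∑ J, ‖y J - y' J‖ ^ 2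
  set z := Function.update y I (y' I)
  have hzI : z I = y' I := Function.update_self ..
  have hzw : z + (Pi.single I w : Fin M → E) = y := update_add_single_sub y y' I
  have hz : ∀ J, ‖(z - y') J‖ ≤ ‖y J - y' J‖ := fun J => by
    simpa using norm_update_add_smul_single_sub_le y y' I (left_mem_Icc.2 zero_le_one) J
  have hW : ∀ s ∈ Icc (0 : ℝ) 1, W2 (emp (z + s • (Pi.single I w : Fin M → E))) (emp y') ≤ √S :=
    fun s hs => W2_emp_le_of_norm_sub_le hM (norm_update_add_smul_single_sub_le y y' I hs)
  have hA : ∀ s ∈ Icc (0 : ℝ) 1, 1 + ‖z I + s • w‖ + ‖z I‖ ≤ A := fun s hs => by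
    rw [hzI]; exact one_add_norm_add_smul_sub_add_norm_le (y' I) (y I) hs
  have hstep1 := hf.abs_sub_sub_le_of_apply_eq_zero hM hL hDμ y' (z - y') I (by simp [hzI])
  rw [add_sub_cancel] at hstep1
  have hstep2 := hf.abs_sub_sub_single_le hM hL hχ hp hDx hDμ z I w (memP2_emp hM y') hW hA
  rw [hzw, hzI, add_sub_cancel] at hstep2
  have hsum : ∑ J, ⟪Dμ (y' I) (emp y') (y' J), y J - y' J⟫
      = ∑ J, ⟪Dμ (y' I) (emp y') (y' J), (z - y') J⟫ + ⟪Dμ (y' I) (emp y') (y' I), w⟫ := by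
    simp only [← hzw, Pi.add_apply, add_sub_right_comm, inner_add_right, Finset.sum_add_distrib]
    congr 1
    rw [Fintype.sum_eq_single I fun J hJ => by rw [Pi.single_eq_of_ne hJ, inner_zero_right],
      Pi.single_eq_same]
  have hS : (M : ℝ)⁻¹ * ∑ J, ‖(z - y') J‖ ^ 2 ≤ S := mul_le_mul_of_nonneg_left
    (Finset.sum_le_sum fun J _ => pow_le_pow_left₀ (norm_nonneg _) (hz J) 2) (by positivity)
  have hamgm : √S * ‖w‖ ≤ (S + ‖w‖ ^ 2) / 2 := by
    nlinarith [two_mul_le_add_sq (√S) ‖w‖, Real.sq_sqrt (by positivity : 0 ≤ S)]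
  have hM' : (0 : ℝ) ≤ (M : ℝ)⁻¹ := by positivity
  have h1 := mul_le_mul_of_nonneg_left hamgm hL
  have h2 := mul_le_mul_of_nonneg_left h1 hM'
  have h3 := mul_le_mul_of_nonneg_left hS (by positivity : (0 : ℝ) ≤ 2 * L)
  have h4 : 0 ≤ (M : ℝ)⁻¹ * (L * ‖w‖ ^ 2) := by positivity
  have h5 : 0 ≤ (M : ℝ)⁻¹ * (L * S) := by positivity
  have h6 : 0 ≤ L * ‖w‖ ^ 2 := by positivity
  rw [empiricalTaylorRemainder, hsum]
  rw [abs_le] at hstep1 hstep2 ⊢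
  constructor <;> linarith

lemma abs_empiricalTaylorRemainder_le (hL : 0 ≤ L) (hχ : 0 ≤ χ) (hp : 0 ≤ p)
    (hDx : WeightedLipschitzX L χ Dx) (hDμ : WeightedLipschitzμ L p Dμ)
    (hf : ∀ M, 0 < M → HasEmpiricalGradient f Dx Dμ M) {N : ℕ} (hN : 0 < N)
    (x x' : Fin N → E) (i : Fin N) :
    |empiricalTaylorRemainder f Dx Dμ x x' i|
      ≤ L * (((2 * (1 + ‖x i‖ + ‖x' i‖)) ^ χ + 1) * ‖x i - x' i‖ ^ 2
          + 3 * ((N : ℝ)⁻¹ * ∑ j, ‖x j - x' j‖ ^ 2)) := by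
  refine le_of_forall_le_add_div_natCast (c := L * (((2 * (1 + ‖x i‖ + ‖x' i‖)) ^ p + 2)
    * ‖x i - x' i‖ ^ 2 + (N : ℝ)⁻¹ * ∑ j, ‖x j - x' j‖ ^ 2)) fun m hm => ?_
  have hmN : 0 < m * N := Nat.mul_pos hm hN
  set I : Fin (m * N) := finProdFinEquiv (⟨0, hm⟩, i)
  have hI : I.modNat = i := congrArg Prod.snd (finProdFinEquiv.symm_apply_apply (⟨0, hm⟩, i))
  have key := (hf _ hmN).abs_empiricalTaylorRemainder_le hmN hL hχ hp hDx hDμ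
    (Fin.repeat m x) (Fin.repeat m x') I
  rw [empiricalTaylorRemainder_repeat _ _ _ hm.ne', hI] at key
  simp only [Fin.repeat_apply, hI, inv_mul_sum_modNat hm.ne' fun j => ‖x j - x' j‖ ^ 2] at key
  refine key.trans (add_le_add le_rfl ?_)
  rw [inv_mul_eq_div]
  gcongr
  exact_mod_cast Nat.le_mul_of_pos_right m hN

end Lions

/-- Taylor-type remainder estimate for functions of empirical measures (Lemma 7 of
Kumar–Neelima 2020).  Here `Dx f` is the gradient of `f` in the state variable and
`Dμ f` its Lions derivative; the Lions-derivative property is encoded through the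
differentiability of the empirical projections `x ↦ f(x^i, (1/N)∑δ_{x^j})`, whose
gradient is given by `Dx` and `Dμ` in the standard way. -/
theorem empirical_taylor_remainder {d : ℕ} (L χ ξ : ℝ)
    (hL : 0 < L) (hχ : 0 ≤ χ) (hξ : 0 ≤ ξ)
    (f : EuclideanSpace ℝ (Fin d) → Measure (EuclideanSpace ℝ (Fin d)) → ℝ)
    (Dx : EuclideanSpace ℝ (Fin d) → Measure (EuclideanSpace ℝ (Fin d)) →
      EuclideanSpace ℝ (Fin d))
    (Dμ : EuclideanSpace ℝ (Fin d) → Measure (EuclideanSpace ℝ (Fin d)) →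
      EuclideanSpace ℝ (Fin d) → EuclideanSpace ℝ (Fin d))
    (hDx : ∀ (x x' : EuclideanSpace ℝ (Fin d))
      (μ μ' : Measure (EuclideanSpace ℝ (Fin d))), MemP2 μ → MemP2 μ' →
      ‖Dx x μ - Dx x' μ'‖ ≤ L * ((1 + ‖x‖ + ‖x'‖) ^ χ * ‖x - x'‖ + W2 μ μ'))
    (hDμ : ∀ (x x' y y' : EuclideanSpace ℝ (Fin d))
      (μ μ' : Measure (EuclideanSpace ℝ (Fin d))), MemP2 μ → MemP2 μ' →
      ‖Dμ x μ y - Dμ x' μ' y'‖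
        ≤ L * ((1 + ‖x‖ + ‖x'‖) ^ (ξ + 1) * ‖x - x'‖ + W2 μ μ' + ‖y - y'‖))
    (hLions : ∀ (N : ℕ), 0 < N → ∀ (x : Fin N → EuclideanSpace ℝ (Fin d)) (i : Fin N),
      HasFDerivAt (fun y : Fin N → EuclideanSpace ℝ (Fin d) => f (y i) (emp y))
        ((innerSL ℝ (Dx (x i) (emp x))).comp (ContinuousLinearMap.proj i)
          + (N : ℝ)⁻¹ • ∑ j,
              (innerSL ℝ (Dμ (x i) (emp x) (x j))).comp (ContinuousLinearMap.proj j)) x) :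
    ∃ K > (0 : ℝ), ∀ (N : ℕ), 0 < N →
      ∀ (x x' : Fin N → EuclideanSpace ℝ (Fin d)) (i : Fin N),
      |f (x i) (emp x) - f (x' i) (emp x')
          - (inner ℝ (Dx (x' i) (emp x')) (x i - x' i) : ℝ)
          - (N : ℝ)⁻¹ * ∑ j, (inner ℝ (Dμ (x' i) (emp x') (x' j)) (x j - x' j) : ℝ)|
        ≤ K * (1 + ‖x i‖ + ‖x' i‖) ^ χ * ‖x i - x' i‖ ^ 2
          + K * (N : ℝ)⁻¹ * ∑ j, ‖x j - x' j‖ ^ 2 := by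
  refine ⟨L * (2 ^ χ + 3), by positivity, fun N hN x x' i => ?_⟩
  have hR := abs_empiricalTaylorRemainder_le hL.le hχ (by linarith : (0 : ℝ) ≤ ξ + 1) hDx hDμ
    hLions hN x x' i
  set A := 1 + ‖x i‖ + ‖x' i‖
  set h := ‖x i - x' i‖
  set S := (N : ℝ)⁻¹ * ∑ j, ‖x j - x' j‖ ^ 2
  have hA : 1 ≤ A ^ χ :=
    Real.one_le_rpow (by simp only [A]; linarith [norm_nonneg (x i), norm_nonneg (x' i)]) hχ
  calc |empiricalTaylorRemainder f Dx Dμ x x' i|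
      ≤ L * (((2 * A) ^ χ + 1) * h ^ 2 + 3 * S) := hR
    _ = L * (2 ^ χ * A ^ χ * h ^ 2 + h ^ 2 + 3 * S) := by
        rw [Real.mul_rpow zero_le_two (by positivity)]; ring
    _ ≤ L * ((2 ^ χ + 3) * A ^ χ * h ^ 2 + (2 ^ χ + 3) * S) := by
        have hh : h ^ 2 ≤ A ^ χ * h ^ 2 := le_mul_of_one_le_left (sq_nonneg h) hA
        have h2S : 0 ≤ 2 ^ χ * S := by positivity
        exact mul_le_mul_of_nonneg_left (by linarith [sq_nonneg h]) hL.le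
    _ = _ := by ring
end
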